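/- Let Ω ⊆ ℝ^{n+1} contain (0,…,0,1) with I(Ω) := ⋂_{(α,β)∈Ω} {x : α·x ≤ β} nonempty. Then there exists a finite subset Ω̄ ⊆ Ω with I(Ω̄) = I(Ω) if and only if there exists a finite subset Ω̄ ⊆ Ω with cone(Ω̄) = cl cone(Ω). -/

import Mathlib

/-
Write slack_x (α, β) = β - α ⬝ᵥ x. The inequalities valid on I(Ω) form a closed cone containing
cl cone(Ω), and the two agree when (0, 1) ∈ Ω and I(Ω) ≠ ∅: a point outside cl cone(Ω) is
separated from it by a functional f, and for x₀ ∈ I(Ω) and large s the functional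
slack_x₀ + s f is a positive multiple of some slack_x, where x ∈ I(Ω) violates the inequality of
that point. A finitely generated cone is closed (by Carathéodory's theorem for cones it is a
finite union of cones on linearly independent vectors), so both conditions say that
cl cone(Ω) = cone(Ω̄) for some finite Ω̄ ⊆ Ω, after adding (0, 1) to Ω̄, which leaves I(Ω̄)
unchanged.
-/

/-- The conical hull of a set: all finite nonnegative combinations. -/
def conicalHull {E : Type*} [AddCommMonoid E] [Module ℝ E] (s : Set E) : Set E :=
  {x | ∃ (k : ℕ) (c : Fin k → ℝ) (v : Fin k → E),
    (∀ i, 0 ≤ c i) ∧ (∀ i, v i ∈ s) ∧ x = ∑ i, c i • v i}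

open Set

lemma Finset.exists_sub_mul_nonneg_eq_zero {ι : Type*} {t : Finset ι} {f g : ι → ℝ}
    (hf : ∀ i ∈ t, 0 ≤ f i) (hg : ∃ i ∈ t, 0 < g i) :
    ∃ τ : ℝ, ∃ i₀ ∈ t, (∀ i ∈ t, 0 ≤ f i - τ * g i) ∧ f i₀ - τ * g i₀ = 0 := by
  obtain ⟨i₀, hi₀, hmin⟩ := ({i ∈ t | 0 < g i}).exists_min_image (fun i => f i / g i)
    (by simpa [Finset.Nonempty] using hg)
  rw [Finset.mem_filter] at hi₀
  refine ⟨f i₀ / g i₀, i₀, hi₀.1, fun i hi => ?_, by field_simp [hi₀.2.ne']; ring⟩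
  rcases lt_or_ge 0 (g i) with hgi | hgi
  · have hle := hmin i (Finset.mem_filter.mpr ⟨hi, hgi⟩)
    rw [le_div_iff₀ hgi] at hle
    linarith
  · nlinarith [div_nonneg (hf i₀ hi₀.1) hi₀.2.le, hf i hi]

section Hull
variable {E : Type*} [AddCommGroup E] [Module ℝ E]

lemma conicalHull_eq_hull (s : Set E) : conicalHull s = PointedCone.hull ℝ s := by
  ext x
  rw [SetLike.mem_coe, Submodule.mem_span_set']
  constructor
  · rintro ⟨k, c, v, hc, hv, rfl⟩
    exact ⟨k, fun i => ⟨c i, hc i⟩, fun i => ⟨v i, hv i⟩, rfl⟩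
  · rintro ⟨k, c, v, rfl⟩
    exact ⟨k, fun i => c i, fun i => v i, fun i => (c i).2, fun i => (v i).2, rfl⟩

namespace PointedCone

lemma mem_hull_finset_iff {t : Finset E} {x : E} :
    x ∈ hull ℝ (t : Set E) ↔ ∃ f : E → ℝ, (∀ e ∈ t, 0 ≤ f e) ∧ ∑ e ∈ t, f e • e = x := by
  constructor
  · intro hx
    obtain ⟨f, -, rfl⟩ := Submodule.mem_span_finset.mp hx
    exact ⟨fun e => f e, fun e _ => (f e).2, rfl⟩
  · rintro ⟨f, hf, rfl⟩
    exact Submodule.sum_mem _ fun e he => smul_mem _ (hf e he) (subset_hull he)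

lemma mem_hull_erase [DecidableEq E] {t : Finset E} (ht : ¬LinearIndepOn ℝ id (t : Set E))
    {x : E} (hx : x ∈ hull ℝ (t : Set E)) : ∃ y ∈ t, x ∈ hull ℝ (t.erase y : Set E) := by
  obtain ⟨f, hf, rfl⟩ := mem_hull_finset_iff.mp hx
  obtain ⟨g, hg, hgpos⟩ : ∃ g : E → ℝ, ∑ e ∈ t, g e • e = 0 ∧ ∃ e ∈ t, 0 < g e := by
    obtain ⟨g, hg, e, he, hge⟩ := not_linearIndepOn_finset_iff.mp ht
    rcases hge.lt_or_gt with hneg | hpos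
    · exact ⟨-g, by simpa using hg, e, he, by simpa using hneg⟩
    · exact ⟨g, hg, e, he, hpos⟩
  obtain ⟨τ, y, hy, hnonneg, hzero⟩ := Finset.exists_sub_mul_nonneg_eq_zero hf hgpos
  refine ⟨y, hy, mem_hull_finset_iff.mpr
    ⟨fun e => f e - τ * g e, fun e he => hnonneg e (Finset.mem_of_mem_erase he), ?_⟩⟩
  rw [Finset.sum_erase _ (by simp only [hzero, zero_smul])]
  simp only [sub_smul, mul_smul, Finset.sum_sub_distrib, ← Finset.smul_sum, hg, smul_zero,
    sub_zero]

lemma exists_linearIndepOn_subset_of_mem_hull {t : Finset E} {x : E}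
    (hx : x ∈ hull ℝ (t : Set E)) :
    ∃ u ⊆ t, LinearIndepOn ℝ id (u : Set E) ∧ x ∈ hull ℝ (u : Set E) := by
  classical
  induction t using Finset.strongInduction with
  | H t ih =>
    by_cases ht : LinearIndepOn ℝ id (t : Set E)
    · exact ⟨t, subset_rfl, ht, hx⟩
    · obtain ⟨y, hy, hxy⟩ := mem_hull_erase ht hx
      obtain ⟨u, hu, hind, hxu⟩ := ih _ (Finset.erase_ssubset hy) hxy
      exact ⟨u, hu.trans (Finset.erase_subset _ _), hind, hxu⟩

section Topology
variable [TopologicalSpace E] [IsTopologicalAddGroup E] [ContinuousSMul ℝ E] [T2Space E]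

lemma isClosed_hull_of_linearIndepOn {t : Finset E} (ht : LinearIndepOn ℝ id (t : Set E)) :
    IsClosed (hull ℝ (t : Set E) : Set E) := by
  set L := Fintype.linearCombination ℝ (Subtype.val : t → E)
  have hL : LinearMap.ker L = ⊥ :=
    LinearMap.ker_eq_bot.mpr (linearIndependent_iff_injective_fintypeLinearCombination.mp ht)
  have himage : (hull ℝ (t : Set E) : Set E) = L '' Set.Ici 0 := by
    ext x
    constructor
    · intro hx
      obtain ⟨f, hf, rfl⟩ := mem_hull_finset_iff.mp hx
      exact ⟨fun e => f e, fun e => hf e e.2, Finset.sum_coe_sort t fun e => f e • e⟩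
    · rintro ⟨c, hc, rfl⟩
      exact Submodule.sum_mem _ fun e _ => smul_mem _ (hc e) (subset_hull e.2)
  rw [himage]
  exact (L.isClosedEmbedding_of_injective hL).isClosedMap _ isClosed_Ici

lemma isClosed_hull_of_finite {s : Set E} (hs : s.Finite) : IsClosed (hull ℝ s : Set E) := by
  classical
  lift s to Finset E using hs
  have hunion : (hull ℝ (s : Set E) : Set E) =
      ⋃ u ∈ s.powerset.filter (fun u : Finset E => LinearIndepOn ℝ id (u : Set E)),
        (hull ℝ (u : Set E) : Set E) := by
    refine subset_antisymm (fun x hx => ?_) (iUnion₂_subset fun u hu => ?_)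
    · obtain ⟨u, hus, hind, hxu⟩ := exists_linearIndepOn_subset_of_mem_hull hx
      exact mem_biUnion (Finset.mem_filter.mpr ⟨Finset.mem_powerset.mpr hus, hind⟩) hxu
    · exact Submodule.span_mono
        (Finset.coe_subset.mpr (Finset.mem_powerset.mp (Finset.mem_filter.mp hu).1))
  rw [hunion]
  exact isClosed_biUnion_finset fun u hu =>
    isClosed_hull_of_linearIndepOn (Finset.mem_filter.mp hu).2

end Topology

end PointedCone

lemma subset_conicalHull (s : Set E) : s ⊆ conicalHull s :=
  (conicalHull_eq_hull s).symm ▸ PointedCone.subset_hull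

lemma isClosed_conicalHull_of_finite [TopologicalSpace E] [IsTopologicalAddGroup E]
    [ContinuousSMul ℝ E] [T2Space E] {s : Set E} (hs : s.Finite) : IsClosed (conicalHull s) :=
  (conicalHull_eq_hull s).symm ▸ PointedCone.isClosed_hull_of_finite hs

end Hull

section Inequalities
variable {n : ℕ}

def slack (x : Fin n → ℝ) : ((Fin n → ℝ) × ℝ) →ₗ[ℝ] ℝ where
  toFun p := p.2 - p.1 ⬝ᵥ x
  map_add' p q := by simp only [Prod.fst_add, Prod.snd_add, add_dotProduct]; ring
  map_smul' c p := by
    simp only [Prod.smul_snd, smul_eq_mul, Prod.smul_fst, smul_dotProduct, RingHom.id_apply]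
    ring

lemma slack_apply (x : Fin n → ℝ) (p : (Fin n → ℝ) × ℝ) : slack x p = p.2 - p.1 ⬝ᵥ x := rfl

lemma exists_eq_mul_slack (f : ((Fin n → ℝ) × ℝ) →ₗ[ℝ] ℝ) (hf : f (0, 1) ≠ 0) :
    ∃ x, ∀ p, f p = f (0, 1) * slack x p := by
  set y : Fin n → ℝ := fun j => f (Pi.single j 1, 0)
  have hdecomp : ∀ p : (Fin n → ℝ) × ℝ, f p = p.1 ⬝ᵥ y + p.2 * f (0, 1) := by
    intro p
    have hp : p = ∑ j, p.1 j • ((Pi.single j 1 : Fin n → ℝ), (0 : ℝ)) + p.2 • (0, 1) := by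
      ext <;> simp [Prod.fst_sum, Prod.snd_sum, Finset.sum_apply, Pi.single_apply]
    conv_lhs => rw [hp, map_add, map_sum]
    simp only [map_smul, smul_eq_mul, dotProduct, y]
  refine ⟨-(f (0, 1))⁻¹ • y, fun p => ?_⟩
  rw [hdecomp, slack_apply, dotProduct_smul, smul_eq_mul]
  field_simp
  ring

def solutionSet (S : Set ((Fin n → ℝ) × ℝ)) : Set (Fin n → ℝ) :=
  {x | ∀ p ∈ S, p.1 ⬝ᵥ x ≤ p.2}

def validIneqs (X : Set (Fin n → ℝ)) : PointedCone ℝ ((Fin n → ℝ) × ℝ) :=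
  ⨅ x ∈ X, (PointedCone.positive ℝ ℝ).comap (slack x)

lemma mem_validIneqs {X : Set (Fin n → ℝ)} {p : (Fin n → ℝ) × ℝ} :
    p ∈ validIneqs X ↔ ∀ x ∈ X, p.1 ⬝ᵥ x ≤ p.2 := by
  simp [validIneqs, Submodule.mem_iInf, PointedCone.mem_comap, PointedCone.mem_positive,
    slack_apply]

lemma isClosed_validIneqs (X : Set (Fin n → ℝ)) :
    IsClosed (validIneqs X : Set ((Fin n → ℝ) × ℝ)) := by
  have hcoe : (validIneqs X : Set ((Fin n → ℝ) × ℝ)) = ⋂ x ∈ X, slack x ⁻¹' Ici 0 := by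
    ext p
    simp [mem_validIneqs, slack_apply]
  rw [hcoe]
  exact isClosed_biInter fun x _ => isClosed_Ici.preimage (slack x).continuous_of_finiteDimensional

lemma closure_conicalHull_subset_validIneqs (S : Set ((Fin n → ℝ) × ℝ)) :
    closure (conicalHull S) ⊆ validIneqs (solutionSet S) := by
  refine closure_minimal ?_ (isClosed_validIneqs _)
  rw [conicalHull_eq_hull]
  exact Submodule.span_le.mpr fun p hp => mem_validIneqs.mpr fun x hx => hx p hp

lemma exists_mem_solutionSet_lt_of_notMem_closure {S : Set ((Fin n → ℝ) × ℝ)}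
    (h0 : ((0 : Fin n → ℝ), (1 : ℝ)) ∈ S) {x₀ : Fin n → ℝ} (hx₀ : x₀ ∈ solutionSet S)
    {p : (Fin n → ℝ) × ℝ} (hp : p ∉ closure (conicalHull S)) :
    ∃ x ∈ solutionSet S, p.2 < p.1 ⬝ᵥ x := by
  rw [conicalHull_eq_hull] at hp
  obtain ⟨f, hfC, hfp⟩ :=
    ProperCone.hyperplane_separation_point (Submodule.closure (PointedCone.hull ℝ S)) hp
  have hfS : ∀ q ∈ S, 0 ≤ f q := fun q hq => hfC q (subset_closure (PointedCone.subset_hull hq))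
  -- `f` may vanish at `(0, 1)`, but `slack x₀ + s • f` equals `1 + s * f (0, 1) > 0` there and,
  -- for large `s`, is still negative at `p`.
  obtain ⟨s, hs, hsp⟩ : ∃ s : ℝ, 0 ≤ s ∧ slack x₀ p + s * f p < 0 := by
    refine ⟨(|slack x₀ p| + 1) / -f p, div_nonneg (by positivity) (neg_nonneg.mpr hfp.le), ?_⟩
    rw [div_mul_eq_mul_div, div_neg, mul_div_assoc, div_self hfp.ne]
    linarith [le_abs_self (slack x₀ p)]
  set g := slack x₀ + s • (f : ((Fin n → ℝ) × ℝ) →ₗ[ℝ] ℝ)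
  have hgS : ∀ q ∈ S, 0 ≤ g q := fun q hq =>
    add_nonneg (sub_nonneg.mpr (hx₀ q hq)) (mul_nonneg hs (hfS q hq))
  have hg0 : 0 < g (0, 1) := by
    have hg01 : g (0, 1) = 1 + s * f (0, 1) := by simp [g, slack_apply]
    rw [hg01]
    linarith [mul_nonneg hs (hfS _ h0)]
  obtain ⟨x, hx⟩ := exists_eq_mul_slack g hg0.ne'
  refine ⟨x, fun q hq => ?_, ?_⟩
  · have := (mul_nonneg_iff_of_pos_left hg0).mp (hx q ▸ hgS q hq)
    rwa [slack_apply, sub_nonneg] at this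
  · have hgp : g p < 0 := hsp
    have := neg_of_mul_neg_right (hx p ▸ hgp) hg0.le
    rwa [slack_apply, sub_neg] at this

lemma closure_conicalHull_eq_validIneqs {S : Set ((Fin n → ℝ) × ℝ)}
    (h0 : ((0 : Fin n → ℝ), (1 : ℝ)) ∈ S) (hne : (solutionSet S).Nonempty) :
    closure (conicalHull S) = validIneqs (solutionSet S) := by
  refine subset_antisymm (closure_conicalHull_subset_validIneqs S) fun p hp => ?_
  by_contra hpS
  obtain ⟨x, hx, hlt⟩ := exists_mem_solutionSet_lt_of_notMem_closure h0 hne.some_mem hpS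
  exact (mem_validIneqs.mp hp x hx).not_gt hlt

lemma solutionSet_insert_zero_one (S : Set ((Fin n → ℝ) × ℝ)) :
    solutionSet (insert ((0 : Fin n → ℝ), (1 : ℝ)) S) = solutionSet S := by
  ext x
  simp [solutionSet]

end Inequalities

/-- The closure `I(Ω)` is finitely generated (cut off by finitely many of the
inequalities in `Ω`) iff `cl cone(Ω)` is generated by a finite subset of `Ω`. -/
theorem finitely_generated_iff (n : ℕ) (Ω : Set ((Fin n → ℝ) × ℝ))
    (h0 : ((0 : Fin n → ℝ), (1 : ℝ)) ∈ Ω)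
    (hne : {x : Fin n → ℝ | ∀ p ∈ Ω, ∑ j, p.1 j * x j ≤ p.2}.Nonempty) :
    (∃ Ωbar : Set ((Fin n → ℝ) × ℝ), Ωbar ⊆ Ω ∧ Ωbar.Finite ∧
        {x : Fin n → ℝ | ∀ p ∈ Ωbar, ∑ j, p.1 j * x j ≤ p.2}
          = {x : Fin n → ℝ | ∀ p ∈ Ω, ∑ j, p.1 j * x j ≤ p.2}) ↔
      (∃ Ωbar : Set ((Fin n → ℝ) × ℝ), Ωbar ⊆ Ω ∧ Ωbar.Finite ∧
        conicalHull Ωbar = closure (conicalHull Ω)) := by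
  change (∃ Ωbar, Ωbar ⊆ Ω ∧ Ωbar.Finite ∧ solutionSet Ωbar = solutionSet Ω) ↔ _
  change (solutionSet Ω).Nonempty at hne
  constructor
  · rintro ⟨Ωbar, hsub, hfin, hI⟩
    have hI' : solutionSet (insert (0, 1) Ωbar) = solutionSet Ω := by
      rw [solutionSet_insert_zero_one, hI]
    refine ⟨insert (0, 1) Ωbar, insert_subset h0 hsub, hfin.insert _, ?_⟩
    rw [← (isClosed_conicalHull_of_finite (hfin.insert _)).closure_eq,
      closure_conicalHull_eq_validIneqs (mem_insert _ _) (hI' ▸ hne),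
      closure_conicalHull_eq_validIneqs h0 hne, hI']
  · rintro ⟨Ωbar, hsub, hfin, hcone⟩
    refine ⟨Ωbar, hsub, hfin,
      subset_antisymm (fun x hx p hp => ?_) fun x hx p hp => hx p (hsub hp)⟩
    have hp' : p ∈ closure (conicalHull Ωbar) :=
      subset_closure (hcone ▸ subset_closure (subset_conicalHull Ω hp))
    exact mem_validIneqs.mp (closure_conicalHull_subset_validIneqs Ωbar hp') x hx
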